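/- arXiv:math/0410488 — 3 statements merged into one kernel-verified Lean document; each statement's English description precedes it below -/
import Mathlib

section
/- Let h_{i-1}, h_i, h_{i+1} > 0. Define a_i = −3h_i²/((h_{i-1}+h_i)(3h_{i-1}+4h_i+3h_{i+1})) and ā_i = −3h_i²/((3h_{i-1}+4h_i+3h_{i+1})(h_i+h_{i+1})). Then |a_i| ≤ 3/4 and |ā_i| ≤ 3/4. -/
/-- the bivariate T₂ coefficients are bounded by 3/4. -/
theorem stmt_3 (h0 h1 h2 : ℝ) (hh0 : 0 < h0) (hh1 : 0 < h1) (hh2 : 0 < h2) :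
    |(-3 * h1 ^ 2 / ((h0 + h1) * (3 * h0 + 4 * h1 + 3 * h2)))| ≤ 3 / 4 ∧
    |(-3 * h1 ^ 2 / ((3 * h0 + 4 * h1 + 3 * h2) * (h1 + h2)))| ≤ 3 / 4 := by
  have d1 : 0 < (h0 + h1) * (3 * h0 + 4 * h1 + 3 * h2) := by positivity
  have d2 : 0 < (3 * h0 + 4 * h1 + 3 * h2) * (h1 + h2) := by positivity
  constructor
  · rw [abs_div, abs_of_pos d1, div_le_iff₀ d1, abs_of_nonpos (by nlinarith)]
    nlinarith
  · rw [abs_div, abs_of_pos d2, div_le_iff₀ d2, abs_of_nonpos (by nlinarith)]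
    nlinarith
end

section
/- Let h_{i-1}, h_i, h_{i+1}, k_{j-1}, k_j, k_{j+1} > 0. With a_i = −3h_i²/((h_{i-1}+h_i)(3h_{i-1}+4h_i+3h_{i+1})), ā_i = −3h_i²/((3h_{i-1}+4h_i+3h_{i+1})(h_i+h_{i+1})), c_j and c̄_j defined analogously in the k-variables, and b_{ij} = 1 − (a_i + ā_i + c_j + c̄_j), one has |a_i| + |ā_i| + |b_{ij}| + |c_j| + |c̄_j| ≤ 7. -/
lemma stmt_4_aux (D y : ℝ) (hy : 0 < y) (hD : 4 * y ^ 2 ≤ D) :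
    -(3/4) ≤ -3 * y ^ 2 / D ∧ -3 * y ^ 2 / D ≤ 0 := by
  have hD0 : 0 < D := lt_of_lt_of_le (by positivity) hD
  constructor
  · rw [le_div_iff₀ hD0]; nlinarith
  · exact div_nonpos_of_nonpos_of_nonneg (by nlinarith) hD0.le

/-- the sum of absolute values of the T₂ coefficients is at most 7. -/
theorem stmt_4 (h0 h1 h2 k0 k1 k2 : ℝ)
    (hh0 : 0 < h0) (hh1 : 0 < h1) (hh2 : 0 < h2)
    (hk0 : 0 < k0) (hk1 : 0 < k1) (hk2 : 0 < k2) :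
    let a := -3 * h1 ^ 2 / ((h0 + h1) * (3 * h0 + 4 * h1 + 3 * h2))
    let abar := -3 * h1 ^ 2 / ((3 * h0 + 4 * h1 + 3 * h2) * (h1 + h2))
    let c := -3 * k1 ^ 2 / ((k0 + k1) * (3 * k0 + 4 * k1 + 3 * k2))
    let cbar := -3 * k1 ^ 2 / ((3 * k0 + 4 * k1 + 3 * k2) * (k1 + k2))
    let b := 1 - (a + abar + c + cbar)
    |a| + |abar| + |b| + |c| + |cbar| ≤ 7 := by
  intro a abar c cbar b
  obtain ⟨ha1, ha2⟩ := stmt_4_aux _ _ hh1 (by nlinarith :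
    4 * h1 ^ 2 ≤ (h0 + h1) * (3 * h0 + 4 * h1 + 3 * h2))
  obtain ⟨hA1, hA2⟩ := stmt_4_aux _ _ hh1 (by nlinarith :
    4 * h1 ^ 2 ≤ (3 * h0 + 4 * h1 + 3 * h2) * (h1 + h2))
  obtain ⟨hc1, hc2⟩ := stmt_4_aux _ _ hk1 (by nlinarith :
    4 * k1 ^ 2 ≤ (k0 + k1) * (3 * k0 + 4 * k1 + 3 * k2))
  obtain ⟨hC1, hC2⟩ := stmt_4_aux _ _ hk1 (by nlinarith :
    4 * k1 ^ 2 ≤ (3 * k0 + 4 * k1 + 3 * k2) * (k1 + k2))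
  have hb : 0 ≤ b := by simp only [b]; linarith
  rw [abs_of_nonpos ha2, abs_of_nonpos hA2, abs_of_nonpos hc2, abs_of_nonpos hC2,
    abs_of_nonneg hb]
  simp only [b]
  linarith
end

section
/- Let h_{i-1}, h_i, h_{i+1}, k_{j-1}, k_j, k_{j+1} > 0. With α_i = −h_i²/((h_{i-1}+h_i)(h_{i-1}+h_i+h_{i+1})), ᾱ_i = −h_i²/((h_{i-1}+h_i+h_{i+1})(h_i+h_{i+1})), γ_j and γ̄_j defined analogously in the k-variables, and β_{ij} = 1 − (α_i + ᾱ_i + γ_j + γ̄_j), one has |α_i| + |ᾱ_i| + |β_{ij}| + |γ_j| + |γ̄_j| ≤ 9. -/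
lemma aux_bd (a b c : ℝ) (ha : 0 < a) (hb : 0 < b) (hc : 0 < c) :
    -1 ≤ -b ^ 2 / ((a + b) * (a + b + c)) ∧ -b ^ 2 / ((a + b) * (a + b + c)) ≤ 0 := by
  have hd : 0 < (a + b) * (a + b + c) := by positivity
  constructor
  · rw [neg_div, neg_le_neg_iff, div_le_one hd]
    nlinarith
  · rw [neg_div]
    have : 0 ≤ b ^ 2 / ((a + b) * (a + b + c)) := by positivity
    linarith

/-- the sum of absolute values of the bivariate G₂ coefficients is at most 9. -/
theorem stmt_5 (h0 h1 h2 k0 k1 k2 : ℝ)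
    (hh0 : 0 < h0) (hh1 : 0 < h1) (hh2 : 0 < h2)
    (hk0 : 0 < k0) (hk1 : 0 < k1) (hk2 : 0 < k2) :
    let α := -h1 ^ 2 / ((h0 + h1) * (h0 + h1 + h2))
    let αbar := -h1 ^ 2 / ((h0 + h1 + h2) * (h1 + h2))
    let γ := -k1 ^ 2 / ((k0 + k1) * (k0 + k1 + k2))
    let γbar := -k1 ^ 2 / ((k0 + k1 + k2) * (k1 + k2))
    let β := 1 - (α + αbar + γ + γbar)
    |α| + |αbar| + |β| + |γ| + |γbar| ≤ 9 := by
  intro α αbar γ γbar β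
  obtain ⟨ha1, ha2⟩ := aux_bd h0 h1 h2 hh0 hh1 hh2
  obtain ⟨hb1, hb2⟩ := aux_bd h2 h1 h0 hh2 hh1 hh0
  obtain ⟨hc1, hc2⟩ := aux_bd k0 k1 k2 hk0 hk1 hk2
  obtain ⟨hd1, hd2⟩ := aux_bd k2 k1 k0 hk2 hk1 hk0
  have eb : αbar = -h1 ^ 2 / ((h2 + h1) * (h2 + h1 + h0)) := by
    simp only [αbar]; ring_nf
  have ed : γbar = -k1 ^ 2 / ((k2 + k1) * (k2 + k1 + k0)) := by
    simp only [γbar]; ring_nf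
  have bα : -1 ≤ α ∧ α ≤ 0 := ⟨ha1, ha2⟩
  have bαb : -1 ≤ αbar ∧ αbar ≤ 0 := by rw [eb]; exact ⟨hb1, hb2⟩
  have bγ : -1 ≤ γ ∧ γ ≤ 0 := ⟨hc1, hc2⟩
  have bγb : -1 ≤ γbar ∧ γbar ≤ 0 := by rw [ed]; exact ⟨hd1, hd2⟩
  obtain ⟨a1, a2⟩ := bα; obtain ⟨b1, b2⟩ := bαb
  obtain ⟨c1, c2⟩ := bγ; obtain ⟨d1, d2⟩ := bγb
  have A : |α| ≤ 1 := abs_le.2 ⟨a1, by linarith⟩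
  have B : |αbar| ≤ 1 := abs_le.2 ⟨b1, by linarith⟩
  have C : |γ| ≤ 1 := abs_le.2 ⟨c1, by linarith⟩
  have D : |γbar| ≤ 1 := abs_le.2 ⟨d1, by linarith⟩
  have E : |β| ≤ 5 := by
    have hβ : β = 1 - (α + αbar + γ + γbar) := rfl
    rw [hβ]
    exact abs_le.2 ⟨by linarith, by linarith⟩
  linarith
end
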